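/- Suppose the reverse model satisfies Pr(x) = PS(x) for all x (zero reverse-validation error) and γ + δ ≠ 1, with Pr = (1-α-β)·Pφ + α·PS + β·PT and Pφ = (1-γ-δ)·PS + γ·PT + δ·PT'. If additionally C₁ ≠ 0 and PT = PT' (intermediate and target share the conditional distribution), then Pφ(x) = PT'(x) for all x, where C₁ = (1-α-β)(1-γ-δ) - (1-α). -/

import Mathlib

/-! When the intermediate and target conditionals agree, `Pφ` is a mixture of `PS` and `PT` only,
and a zero reverse-validation error turns the defining identity of `Pr` into `C₁ * (PS - PT) = 0`.
Since `C₁ ≠ 0`, the source and target conditionals agree, hence so does every mixture of them. -/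

theorem eq_of_mixture_of_mixture_eq {s t φ α β γ δ : ℝ}
    (hφ : φ = (1 - γ - δ) * s + γ * t + δ * t)
    (hs : s = (1 - α - β) * φ + α * s + β * t)
    (hC₁ : (1 - α - β) * (1 - γ - δ) - (1 - α) ≠ 0) :
    s = t := by
  have hC₁_mul : ((1 - α - β) * (1 - γ - δ) - (1 - α)) * (s - t) = 0 := by
    linear_combination -hs - (1 - α - β) * hφ
  exact sub_eq_zero.mp ((mul_eq_zero.mp hC₁_mul).resolve_left hC₁)

theorem stmt_17_general {X : Type*} (PS PT PT' Pphi Pr : X → ℝ) (α β γ δ : ℝ)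
    (hPphi : ∀ x, Pphi x = (1 - γ - δ) * PS x + γ * PT x + δ * PT' x)
    (hPr : ∀ x, Pr x = (1 - α - β) * Pphi x + α * PS x + β * PT x)
    (hRV : ∀ x, Pr x = PS x)
    (hC₁ : (1 - α - β) * (1 - γ - δ) - (1 - α) ≠ 0)
    (hTT' : PT = PT') :
    ∀ x, Pphi x = PT' x := by
  subst hTT'
  intro x
  have hST : PS x = PT x :=
    eq_of_mixture_of_mixture_eq (hPphi x) ((hRV x).symm.trans (hPr x)) hC₁
  rw [hPphi x, hST]
  ring

theorem stmt_17 {X : Type*} (PS PT PT' Pphi Pr : X → ℝ) (α β γ δ : ℝ)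
    (hγδ : γ + δ ≠ 1)
    (hPphi : ∀ x, Pphi x = (1 - γ - δ) * PS x + γ * PT x + δ * PT' x)
    (hPr : ∀ x, Pr x = (1 - α - β) * Pphi x + α * PS x + β * PT x)
    (hRV : ∀ x, Pr x = PS x)
    (hC₁ : (1 - α - β) * (1 - γ - δ) - (1 - α) ≠ 0)
    (hTT' : PT = PT') :
    ∀ x, Pphi x = PT' x :=
  stmt_17_general PS PT PT' Pphi Pr α β γ δ hPphi hPr hRV hC₁ hTT'
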